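/- arXiv:math/9803114 — 5 statements merged into one kernel-verified Lean document; each statement's English description precedes it below -/
import Mathlib

section
/- Let p ≥ 2 and j be positive integers with j not divisible by p. Then in the quotient ring ℤ[X]/(Φ_p(X)), where Φ_p is the p-th cyclotomic polynomial, the image of the j-th cyclotomic polynomial Φ_j(X) divides the constant p. -/
open Polynomial

private lemma nat_bezout (j p : ℕ) (hj : 0 < j) (hp : 0 < p) :
    ∃ a b : ℕ, a * j = Nat.gcd j p + b * p := by
  have hd : (Nat.gcd j p : ℤ) = j * Nat.gcdA j p + p * Nat.gcdB j p := Nat.gcd_eq_gcd_ab j p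
  set x : ℤ := Nat.gcdA j p with hx
  set a : ℤ := x % p + p with ha
  have hp' : (0:ℤ) < p := by exact_mod_cast hp
  have ha1 : 1 ≤ a := by
    have := Int.emod_nonneg x (by positivity : (p:ℤ) ≠ 0)
    omega
  have hdvd : (p:ℤ) ∣ a * j - Nat.gcd j p := by
    have hmod : x % p = x - p * (x / p) := Int.emod_def x p
    have heq : a * j - (Nat.gcd j p : ℤ) = (p:ℤ) * ((1 - x / p) * j - Nat.gcdB j p) := by
      rw [hd, ha, hmod]; ring
    rw [heq]; exact Dvd.intro _ rfl
  obtain ⟨c, hc⟩ := hdvd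
  have hdj : (Nat.gcd j p : ℤ) ≤ j := by
    exact_mod_cast Nat.le_of_dvd hj (Nat.gcd_dvd_left j p)
  have hjpos : (0:ℤ) < j := by exact_mod_cast hj
  have haj : (j:ℤ) ≤ a * j := le_mul_of_one_le_left (le_of_lt hjpos) ha1
  have hc0 : 0 ≤ c := by nlinarith
  refine ⟨a.toNat, c.toNat, ?_⟩
  have h1 : (a.toNat : ℤ) = a := Int.toNat_of_nonneg (by omega)
  have h2 : (c.toNat : ℤ) = c := Int.toNat_of_nonneg hc0
  have hfin : (a.toNat : ℤ) * j = Nat.gcd j p + (c.toNat : ℤ) * p := by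
    rw [h1, h2]; linarith [hc]
  exact_mod_cast hfin

/-- For integers `p ≥ 2` and `j ≥ 1` with `j` not divisible by `p`, the image of the `j`-th
cyclotomic polynomial divides the constant `p` in the quotient ring `ℤ[X]/(Φ_p)`. -/
theorem cyclotomic_dvd_p_mod_cyclotomic (p j : ℕ) (hp : 2 ≤ p) (hj : 0 < j)
    (hpj : ¬ p ∣ j) :
    ∃ u : Polynomial ℤ ⧸ Ideal.span {Polynomial.cyclotomic p ℤ},
      (Ideal.Quotient.mk (Ideal.span {Polynomial.cyclotomic p ℤ}))
          (Polynomial.cyclotomic j ℤ) * u =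
        (p : Polynomial ℤ ⧸ Ideal.span {Polynomial.cyclotomic p ℤ}) := by
  set I := Ideal.span {Polynomial.cyclotomic p ℤ}
  set mk := Ideal.Quotient.mk I with hmk
  set ζ : Polynomial ℤ ⧸ I := mk X with hζ
  have hppos : 0 < p := by omega
  have hmkcyc : mk (cyclotomic p ℤ) = 0 := by
    rw [Ideal.Quotient.eq_zero_iff_mem]
    exact Ideal.subset_span rfl
  -- ζ^p = 1
  have hzp : ζ ^ p = 1 := by
    obtain ⟨t, ht⟩ := map_dvd mk (cyclotomic.dvd_X_pow_sub_one p ℤ)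
    have h0 : mk (X ^ p - 1) = 0 := by rw [ht, hmkcyc, zero_mul]
    have h2 : ζ ^ p - 1 = 0 := by
      rw [hζ, ← map_pow, ← map_one mk, ← map_sub]; exact h0
    linear_combination h2
  -- h := product of cyclotomics over proper divisors
  set h : Polynomial ℤ := ∏ i ∈ (Nat.divisors p).erase p, cyclotomic i ℤ with hh
  have hfactor : cyclotomic p ℤ * h = X ^ p - 1 := by
    rw [hh, ← prod_cyclotomic_eq_X_pow_sub_one hppos ℤ]
    exact Finset.mul_prod_erase (Nat.divisors p) (fun i => cyclotomic i ℤ) (Nat.mem_divisors_self p hppos.ne')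
  -- mk h divides p
  have hstep1 : mk h ∣ (p : Polynomial ℤ ⧸ I) := by
    have hder : derivative (X ^ p - 1 : Polynomial ℤ) = C (p : ℤ) * X ^ (p - 1) := by
      rw [derivative_sub, derivative_one, derivative_X_pow]; ring
    have hder2 : C (p : ℤ) * X ^ (p - 1) =
        derivative (cyclotomic p ℤ) * h + cyclotomic p ℤ * derivative h := by
      rw [← derivative_mul, hfactor, hder]
    have hq : (p : Polynomial ℤ ⧸ I) * ζ ^ (p - 1) = mk (derivative (cyclotomic p ℤ)) * mk h := by
      have := congrArg mk hder2
      simpa only [map_add, map_mul, map_pow, hmkcyc, zero_mul, add_zero,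
        Polynomial.C_eq_natCast, map_natCast] using this
    refine ⟨mk (derivative (cyclotomic p ℤ)) * ζ, ?_⟩
    symm
    calc mk h * (mk (derivative (cyclotomic p ℤ)) * ζ)
        = (p : Polynomial ℤ ⧸ I) * ζ ^ (p - 1) * ζ := by rw [hq]; ring
      _ = (p : Polynomial ℤ ⧸ I) * ζ ^ p := by rw [mul_assoc, ← pow_succ]; congr 2; omega
      _ = (p : Polynomial ℤ ⧸ I) := by rw [hzp, mul_one]
  -- ζ^d - 1 divides mk h, where d = gcd j p
  set d : ℕ := Nat.gcd j p with hd
  have hdpos : 0 < d := Nat.gcd_pos_of_pos_left p hj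
  have hdp : d ∣ p := Nat.gcd_dvd_right j p
  have hdlt : d < p := by
    rcases lt_or_eq_of_le (Nat.le_of_dvd hppos hdp) with hlt | heq
    · exact hlt
    · exact absurd (heq ▸ Nat.gcd_dvd_left j p) hpj
  have hstep2 : ζ ^ d - 1 ∣ mk h := by
    have hsub : Nat.divisors d ⊆ (Nat.divisors p).erase p := by
      intro e he
      rw [Nat.mem_divisors] at he
      rw [Finset.mem_erase, Nat.mem_divisors]
      have hed : e ≤ d := Nat.le_of_dvd hdpos he.1
      exact ⟨by omega, he.1.trans hdp, hppos.ne'⟩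
    have hdvd : (X ^ d - 1 : Polynomial ℤ) ∣ h := by
      rw [← prod_cyclotomic_eq_X_pow_sub_one hdpos ℤ, hh]
      exact Finset.prod_dvd_prod_of_subset _ _ _ hsub
    simpa only [map_sub, map_pow, map_one] using map_dvd mk hdvd
  -- ζ^j - 1 divides ζ^d - 1
  have hstep3 : ζ ^ j - 1 ∣ ζ ^ d - 1 := by
    obtain ⟨a, b, hab⟩ := nat_bezout j p hj hppos
    rw [← hd] at hab
    have hzd : ζ ^ d = (ζ ^ j) ^ a := by
      rw [← pow_mul, mul_comm j a, hab, pow_add, mul_comm b p, pow_mul, hzp, one_pow, mul_one]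
    rw [hzd]
    calc ζ ^ j - 1 ∣ (ζ ^ j) ^ a - 1 ^ a := sub_dvd_pow_sub_pow _ _ a
      _ = (ζ ^ j) ^ a - 1 := by rw [one_pow]
  -- cyclotomic j divides ζ^j - 1
  have hstep4 : mk (cyclotomic j ℤ) ∣ ζ ^ j - 1 := by
    simpa only [map_sub, map_pow, map_one] using map_dvd mk (cyclotomic.dvd_X_pow_sub_one j ℤ)
  obtain ⟨u, hu⟩ := hstep4.trans (hstep3.trans (hstep2.trans hstep1))
  exact ⟨u, hu.symm⟩
end

section
/- For a unit s in a commutative ring with s − s⁻¹ invertible, and any integer n ≥ 2, the quantum integer satisfies the factorization [n] = s^{−n+1} · ∏_{1 < j, j ∣ n} Φ_j(s²), where the product runs over all divisors j of n with j > 1 and Φ_j is the j-th cyclotomic polynomial evaluated at s². -/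
/-!
The quantum integer is a geometric sum in `s²`: `[n] = s^{-(n-1)} (1 + s² + ⋯ + s^{2(n-1)})`, and
`1 + x + ⋯ + x^{n-1}` is the product of the `Φ_j(x)` over the divisors `j ≠ 1` of `n`, since
`xⁿ - 1 = ∏_{j ∣ n} Φ_j(x)` and `Φ_1 = x - 1`.
-/

open Finset Polynomial

theorem Nat.filter_one_lt_divisors (n : ℕ) : n.divisors.filter (1 < ·) = n.divisors.erase 1 := by
  ext j
  simp only [mem_filter, mem_erase]
  constructor
  · rintro ⟨hj, hlt⟩
    exact ⟨hlt.ne', hj⟩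
  · rintro ⟨hne, hj⟩
    exact ⟨hj, lt_of_le_of_ne (Nat.pos_of_mem_divisors hj) hne.symm⟩

theorem Polynomial.prod_cyclotomic_eval_eq_geom_sum {R : Type*} [CommRing R] {n : ℕ} (hn : 0 < n)
    (x : R) : ∏ j ∈ n.divisors.filter (1 < ·), (cyclotomic j R).eval x = ∑ i ∈ range n, x ^ i := by
  simpa only [eval_prod, eval_finsetSum, eval_pow, eval_X, Nat.filter_one_lt_divisors] using
    congrArg (eval x) (prod_cyclotomic_eq_geom_sum hn R)

section QuantumInteger

variable {k : Type*} [CommRing k] (s : kˣ)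

theorem Units.geom_sum₂_self_inv (n : ℕ) :
    ∑ i ∈ range n, (s : k) ^ i * ((s⁻¹ : kˣ) : k) ^ (n - 1 - i) =
      ((s⁻¹ : kˣ) : k) ^ (n - 1) * ∑ i ∈ range n, ((s : k) ^ 2) ^ i := by
  rw [mul_sum]
  refine sum_congr rfl fun i hi => ?_
  have hsplit : n - 1 = (n - 1 - i) + i := by
    have := mem_range.1 hi
    omega
  have hcancel : ((s⁻¹ : kˣ) : k) ^ i * (s : k) ^ i = 1 := by
    rw [← mul_pow, s.inv_mul, one_pow]
  calc (s : k) ^ i * ((s⁻¹ : kˣ) : k) ^ (n - 1 - i)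
      = ((s⁻¹ : kˣ) : k) ^ (n - 1 - i) * (((s⁻¹ : kˣ) : k) ^ i * (s : k) ^ i) * (s : k) ^ i := by
        rw [hcancel]; ring
    _ = ((s⁻¹ : kˣ) : k) ^ (n - 1) * ((s : k) ^ 2) ^ i := by
        conv_rhs => rw [hsplit]
        ring

theorem Units.eq_inv_pow_mul_geom_sum_of_mul_sub_inv (hdiff : IsUnit ((s : k) - ((s⁻¹ : kˣ) : k)))
    {n : ℕ} {qn : k} (hqn : qn * ((s : k) - ((s⁻¹ : kˣ) : k)) = (s : k) ^ n - ((s⁻¹ : kˣ) : k) ^ n) :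
    qn = ((s⁻¹ : kˣ) : k) ^ (n - 1) * ∑ i ∈ range n, ((s : k) ^ 2) ^ i := by
  refine hdiff.mul_right_cancel ?_
  rw [hqn, ← s.geom_sum₂_self_inv, geom_sum₂_mul]

end QuantumInteger

/-- For a unit `s` in a commutative ring with `s - s⁻¹` invertible and `n ≥ 2`, the quantum
integer `[n] = (sⁿ - s⁻ⁿ)/(s - s⁻¹)` factors as `s^{-n+1} ∏_{1<j∣n} Φ_j(s²)`. -/
theorem quantum_integer_cyclotomic_factorization (k : Type*) [CommRing k] (s : kˣ)
    (hdiff : IsUnit ((s : k) - ((s⁻¹ : kˣ) : k)))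
    (n : ℕ) (hn : 2 ≤ n)
    (qn : k) (hqn : qn * ((s : k) - ((s⁻¹ : kˣ) : k)) = (s : k) ^ n - ((s⁻¹ : kˣ) : k) ^ n) :
    qn = ((s⁻¹ : kˣ) : k) ^ (n - 1) *
      ∏ j ∈ n.divisors.filter (fun j => 1 < j),
        (Polynomial.cyclotomic j k).eval ((s : k) ^ 2) := by
  rw [prod_cyclotomic_eval_eq_geom_sum (by omega)]
  exact s.eq_inv_pow_mul_geom_sum_of_mul_sub_inv hdiff hqn
end

section
/- Let N ≥ 1 and let s be a primitive 2(N+K)-th root of unity in ℂ (or any field of characteristic 0 containing such a root), K ≥ 1. Then ∑_{N+K > l₁ > l₂ > ⋯ > l_N = 0} det(s^{2(i−1)l_j})_{1≤i,j≤N} · det(s^{−2(i−1)l_j})_{1≤i,j≤N} = N·(N+K)^{N−1}, where the sum runs over strictly decreasing sequences N+K > l₁ > ⋯ > l_{N−1} > l_N = 0 of integers. -/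
/-!
Write `ζ = s²`, a primitive `M`-th root of unity with `M = N + K`, and for `l : Fin N → Fin M`
let `f l = det (ζ ^ (i * l j)) * det (ζ⁻¹ ^ (i * l j))`. Cauchy–Binet, summed over all tuples
instead of subsets, together with the orthogonality `F_ζ * F_ζ⁻¹ᵀ = M • 1` of the rows of the
`N × M` Fourier matrix, gives `∑ l, f l = N! * M ^ N`. Now `f` is invariant under permuting the
entries of `l` and under translating all of them by the same element of `ℤ/M`, and vanishes unless
`l` is injective. Since exactly `N` translates of an injective `l` contain `0`, double counting
gives `N * ∑ l, f l = M * ∑_{0 ∈ range l} f l`, and sorting identifies the latter sum with `N!`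
times the sum over decreasing `l` ending in `0`.
-/

open Finset
open scoped Matrix

theorem Equiv.Perm.intCast_sign_mul_self {n R : Type*} [Fintype n] [DecidableEq n] [Ring R]
    (σ : Equiv.Perm n) : ((Equiv.Perm.sign σ : ℤ) : R) * (Equiv.Perm.sign σ : ℤ) = 1 := by
  rw [← Int.cast_mul, ← Units.val_mul, Int.units_mul_self, Units.val_one, Int.cast_one]

namespace Matrix

variable {n m R : Type*} [Fintype n] [DecidableEq n] [CommRing R]

theorem sum_det_submatrix_mul_prod [Fintype m] (A : Matrix n m R) (B : Matrix m n R) :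
    ∑ l : n → m, (A.submatrix id l).det * ∏ i, B (l i) i = (A * B).det := by
  simp only [det_apply', mul_apply, prod_univ_sum, Fintype.piFinset_univ, mul_sum, sum_mul]
  rw [sum_comm]
  refine sum_congr rfl fun l _ => sum_congr rfl fun σ _ => ?_
  simp [prod_mul_distrib, mul_assoc]

theorem sum_det_submatrix_mul_det_submatrix [Fintype m] (A : Matrix n m R) (B : Matrix m n R) :
    ∑ l : n → m, (A.submatrix id l).det * (B.submatrix l id).det
      = (Fintype.card n).factorial * (A * B).det := by
  have hB : ∀ l : n → m, (B.submatrix l id).det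
      = ∑ σ : Equiv.Perm n, (Equiv.Perm.sign σ : ℤ) * ∏ i, (B.submatrix id σ) (l i) i := by
    intro l
    rw [← det_transpose, det_apply']
    rfl
  calc ∑ l : n → m, (A.submatrix id l).det * (B.submatrix l id).det
      = ∑ σ : Equiv.Perm n, (Equiv.Perm.sign σ : ℤ) * (A * B.submatrix id σ).det := by
        simp only [hB, mul_sum, ← sum_det_submatrix_mul_prod, mul_left_comm]
        exact sum_comm
    _ = ∑ σ : Equiv.Perm n, (A * B).det := by
        refine sum_congr rfl fun σ _ => ?_
        rw [show A * B.submatrix id σ = (A * B).submatrix id σ from rfl, det_permute',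
          ← mul_assoc, σ.intCast_sign_mul_self, one_mul]
    _ = (Fintype.card n).factorial * (A * B).det := by
        rw [sum_const, card_univ, Fintype.card_perm, nsmul_eq_mul]

theorem det_submatrix_mul_det_submatrix_comp_perm (A : Matrix n m R) (B : Matrix m n R)
    (l : n → m) (σ : Equiv.Perm n) :
    (A.submatrix id (l ∘ σ)).det * (B.submatrix (l ∘ σ) id).det
      = (A.submatrix id l).det * (B.submatrix l id).det := by
  rw [show A.submatrix id (l ∘ σ) = (A.submatrix id l).submatrix id σ from rfl,
    show B.submatrix (l ∘ σ) id = (B.submatrix l id).submatrix σ id from rfl,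
    det_permute', det_permute, mul_mul_mul_comm, σ.intCast_sign_mul_self, one_mul]

theorem det_submatrix_mul_det_submatrix_of_not_injective (A : Matrix n m R) (B : Matrix m n R)
    {l : n → m} (hl : ¬ Function.Injective l) :
    (A.submatrix id l).det * (B.submatrix l id).det = 0 := by
  obtain ⟨i, j, hij, hne⟩ := Function.not_injective_iff.mp hl
  rw [det_zero_of_column_eq hne fun k => by simp [hij], zero_mul]

end Matrix

theorem Fin.exists_perm_strictAnti_comp {n : ℕ} {α : Type*} [LinearOrder α] {l : Fin n → α}
    (hl : Function.Injective l) : ∃ σ : Equiv.Perm (Fin n), StrictAnti (l ∘ σ) := by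
  refine ⟨Fin.revPerm.trans (Tuple.sort l), ?_⟩
  have hmono : StrictMono (l ∘ Tuple.sort l) :=
    (Tuple.monotone_sort l).strictMono_of_injective (hl.comp (Tuple.sort l).injective)
  exact hmono.comp_strictAnti Fin.rev_strictAnti

open Classical in
theorem sum_eq_factorial_mul_sum_strictAnti {n : ℕ} {α R : Type*} [LinearOrder α] [Fintype α]
    [NonAssocSemiring R] (f : (Fin n → α) → R)
    (hperm : ∀ l (σ : Equiv.Perm (Fin n)), f (l ∘ σ) = f l)
    (hinj : ∀ l, ¬ Function.Injective l → f l = 0) :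
    ∑ l, f l = n.factorial * ∑ l ∈ univ.filter StrictAnti, f l := by
  have hsupp : ∑ l ∈ univ.filter Function.Injective, f l = ∑ l, f l :=
    sum_filter_of_ne fun l _ h => not_not.mp (mt (hinj l) h)
  calc ∑ l, f l
      = ∑ p ∈ (univ : Finset (Equiv.Perm (Fin n))) ×ˢ univ.filter StrictAnti, f (p.2 ∘ p.1) := by
        rw [← hsupp]
        symm
        refine sum_nbij (fun p => p.2 ∘ p.1) ?_ ?_ ?_ fun _ _ => rfl
        · intro p hp
          simp only [mem_product, mem_filter, mem_univ, true_and] at hp ⊢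
          exact hp.injective.comp p.1.injective
        · rintro ⟨σ, d⟩ hd ⟨σ', d'⟩ hd' h
          simp only [coe_product, Set.mem_prod, coe_filter, Set.mem_ofPred_eq, mem_univ,
            true_and] at hd hd'
          have hrange : d = d' := by
            refine (hd.2.range_inj hd'.2).mp ?_
            simpa only [Set.range_comp, EquivLike.range_eq_univ, Set.image_univ] using
              congrArg Set.range h
          subst hrange
          simp only [Prod.mk.injEq, and_true]
          exact Equiv.ext fun i => hd.2.injective (congrFun h i)
        · intro l hl
          simp only [coe_filter, Set.mem_ofPred_eq, mem_univ, true_and] at hl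
          obtain ⟨σ, hσ⟩ := Fin.exists_perm_strictAnti_comp hl
          refine ⟨(σ⁻¹, l ∘ σ), by simpa using hσ, ?_⟩
          ext i
          simp
    _ = n.factorial * ∑ l ∈ univ.filter StrictAnti, f l := by
        simp only [sum_product, hperm]
        rw [sum_const, card_univ, Fintype.card_perm, Fintype.card_fin, nsmul_eq_mul]

theorem card_mul_sum_filter_exists_eq_zero {n : ℕ} {G R : Type*} [AddGroup G] [Fintype G]
    [DecidableEq G] [NonAssocSemiring R] (f : (Fin n → G) → R)
    (hshift : ∀ l c, f (fun j => l j + c) = f l)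
    (hinj : ∀ l, ¬ Function.Injective l → f l = 0) :
    Fintype.card G * ∑ l ∈ univ.filter (fun l => ∃ j, l j = 0), f l = n * ∑ l, f l := by
  have hcount : ∀ l : Fin n → G, Function.Injective l →
      (univ.filter fun c : G => ∃ j, l j + c = 0).card = n := by
    intro l hl
    have : (univ.filter fun c : G => ∃ j, l j + c = 0) = univ.image (fun j => -l j) := by
      ext c
      simp [add_eq_zero_iff_neg_eq, eq_comm]
    rw [this, card_image_of_injective _ fun a b h => hl (neg_injective h), card_univ,
      Fintype.card_fin]
  calc Fintype.card G * ∑ l ∈ univ.filter (fun l => ∃ j, l j = 0), f l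
      = ∑ c : G, ∑ l : Fin n → G, if ∃ j, l j + c = 0 then f (fun j => l j + c) else 0 := by
        rw [← nsmul_eq_mul, ← card_univ, ← sum_const, sum_filter]
        refine sum_congr rfl fun c _ => ?_
        exact (Equiv.sum_comp (Equiv.addRight fun _ => c) _).symm
    _ = ∑ l, ((univ.filter fun c : G => ∃ j, l j + c = 0).card : R) * f l := by
        rw [sum_comm]
        refine sum_congr rfl fun l _ => ?_
        simp only [hshift, ← sum_filter, sum_const, nsmul_eq_mul]
    _ = n * ∑ l, f l := by
        rw [mul_sum]
        refine sum_congr rfl fun l _ => ?_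
        by_cases hl : Function.Injective l
        · rw [hcount l hl]
        · simp [hinj l hl]

theorem Antitone.exists_eq_zero_iff {N M : ℕ} [NeZero M] {l : Fin N → Fin M} (hl : Antitone l)
    (h : N - 1 < N) : (∃ j, l j = 0) ↔ (l ⟨N - 1, h⟩ : ℕ) = 0 := by
  constructor
  · rintro ⟨j, hj⟩
    have hle : l ⟨N - 1, h⟩ ≤ l j := hl (Fin.le_def.mpr (by simp only; omega))
    rw [hj, nonpos_iff_eq_zero] at hle
    rw [hle, Fin.val_zero]
  · exact fun h0 => ⟨_, Fin.ext h0⟩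

theorem Fin.sum_pow_eq_zero_of_pow_eq_one {K : Type*} [Field K] {M : ℕ} {u : K}
    (hu : u ^ M = 1) (h1 : u ≠ 1) :
    ∑ x : Fin M, u ^ (x : ℕ) = 0 := by
  rw [Fin.sum_univ_eq_sum_range (u ^ ·), geom_sum_eq h1, hu, sub_self, zero_div]

def dftMatrix {K : Type*} [Monoid K] (u : K) (N M : ℕ) : Matrix (Fin N) (Fin M) K :=
  Matrix.of fun i x => u ^ ((i : ℕ) * (x : ℕ))

namespace dftMatrix

variable {K : Type*} [Field K] {N M : ℕ}

theorem mul_transpose_inv {ζ : K} (hζ : IsPrimitiveRoot ζ M) (hNM : N ≤ M) :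
    dftMatrix ζ N M * (dftMatrix ζ⁻¹ N M)ᵀ = (M : K) • 1 := by
  ext i j
  have hζ0 : ζ ≠ 0 := hζ.ne_zero (lt_of_lt_of_le i.pos hNM).ne'
  have hentry : ∀ x : Fin M, ζ ^ ((i : ℕ) * (x : ℕ)) * ζ⁻¹ ^ ((j : ℕ) * (x : ℕ))
      = (ζ ^ ((i : ℤ) - j)) ^ (x : ℕ) := by
    intro x
    rw [zpow_sub₀ hζ0, div_pow, zpow_natCast, zpow_natCast, ← pow_mul, ← pow_mul, inv_pow,
      div_eq_mul_inv]
  simp only [Matrix.mul_apply, dftMatrix, Matrix.transpose_apply, Matrix.of_apply, hentry,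
    Matrix.smul_apply, Matrix.one_apply, smul_eq_mul]
  by_cases hij : i = j
  · simp [hij]
  · have hne : ζ ^ ((i : ℤ) - j) ≠ 1 := by
      rw [Ne, hζ.zpow_eq_one_iff_dvd]
      intro hdvd
      have := Int.eq_zero_of_abs_lt_dvd hdvd (by rw [abs_lt]; omega)
      exact hij (Fin.ext (by omega))
    have hpow : (ζ ^ ((i : ℤ) - j)) ^ M = 1 := by
      rw [← zpow_natCast, ← zpow_mul, mul_comm, zpow_mul, zpow_natCast, hζ.pow_eq_one, one_zpow]
    rw [Fin.sum_pow_eq_zero_of_pow_eq_one hpow hne, if_neg hij, mul_zero]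

theorem det_submatrix_add_const {R : Type*} [CommRing R] [NeZero M] {u : R} (hu : u ^ M = 1)
    (l : Fin N → Fin M) (c : Fin M) :
    ((dftMatrix u N M).submatrix id fun j => l j + c).det
      = (∏ i : Fin N, u ^ ((i : ℕ) * (c : ℕ))) * ((dftMatrix u N M).submatrix id l).det := by
  rw [← Matrix.det_mul_column]
  congr 1
  ext i j
  simp only [Matrix.submatrix_apply, dftMatrix, Matrix.of_apply, id, Fin.val_add]
  rw [pow_mul', ← pow_eq_pow_mod _ hu, pow_add, mul_pow, ← pow_mul', ← pow_mul', mul_comm]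

def minorProduct (ζ : K) (l : Fin N → Fin M) : K :=
  ((dftMatrix ζ N M).submatrix id l).det * ((dftMatrix ζ⁻¹ N M).submatrix id l).det

theorem minorProduct_eq_det_mul_det_transpose (ζ : K) (l : Fin N → Fin M) :
    minorProduct ζ l
      = ((dftMatrix ζ N M).submatrix id l).det * ((dftMatrix ζ⁻¹ N M)ᵀ.submatrix l id).det := by
  rw [minorProduct, ← Matrix.transpose_submatrix, Matrix.det_transpose]

theorem sum_minorProduct {ζ : K} (hζ : IsPrimitiveRoot ζ M) (hNM : N ≤ M) :
    ∑ l : Fin N → Fin M, minorProduct ζ l = N.factorial * (M : K) ^ N := by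
  simp only [minorProduct_eq_det_mul_det_transpose, Matrix.sum_det_submatrix_mul_det_submatrix,
    mul_transpose_inv hζ hNM, Matrix.det_smul, Matrix.det_one, mul_one, Fintype.card_fin]

theorem minorProduct_comp_perm (ζ : K) (l : Fin N → Fin M) (σ : Equiv.Perm (Fin N)) :
    minorProduct ζ (l ∘ σ) = minorProduct ζ l := by
  simp only [minorProduct_eq_det_mul_det_transpose,
    Matrix.det_submatrix_mul_det_submatrix_comp_perm]

theorem minorProduct_of_not_injective (ζ : K) {l : Fin N → Fin M}
    (hl : ¬ Function.Injective l) : minorProduct ζ l = 0 := by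
  rw [minorProduct_eq_det_mul_det_transpose,
    Matrix.det_submatrix_mul_det_submatrix_of_not_injective _ _ hl]

theorem minorProduct_add_const [NeZero M] {ζ : K} (hζ : IsPrimitiveRoot ζ M) (l : Fin N → Fin M)
    (c : Fin M) : minorProduct ζ (fun j => l j + c) = minorProduct ζ l := by
  have hζ0 : ζ ≠ 0 := hζ.ne_zero (NeZero.ne M)
  have hζinv : ζ⁻¹ ^ M = 1 := by rw [inv_pow, hζ.pow_eq_one, inv_one]
  rw [minorProduct, det_submatrix_add_const hζ.pow_eq_one, det_submatrix_add_const hζinv,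
    mul_mul_mul_comm, ← prod_mul_distrib, minorProduct]
  simp [hζ0]

theorem sum_minorProduct_of_strictAnti_of_last_eq_zero [NeZero M] [CharZero K] {ζ : K}
    (hζ : IsPrimitiveRoot ζ M) (hNM : N ≤ M) (h : N - 1 < N) :
    ∑ l ∈ univ.filter (fun l : Fin N → Fin M =>
        (∀ i j : Fin N, i < j → l j < l i) ∧ (l ⟨N - 1, h⟩ : ℕ) = 0), minorProduct ζ l
      = N * (M : K) ^ (N - 1) := by
  classical
  have hsorted := sum_eq_factorial_mul_sum_strictAnti
    (fun l : Fin N → Fin M => if ∃ j, l j = 0 then minorProduct ζ l else 0)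
    (fun l σ => by simp only [minorProduct_comp_perm, Function.comp_apply,
      σ.surjective.exists (p := fun j => l j = 0)])
    (fun l hl => by simp only [minorProduct_of_not_injective _ hl, ite_self])
  rw [← sum_filter, ← sum_filter, filter_filter] at hsorted
  have hfilter : univ.filter (fun l : Fin N → Fin M =>
        (∀ i j : Fin N, i < j → l j < l i) ∧ (l ⟨N - 1, h⟩ : ℕ) = 0)
      = univ.filter (fun l => StrictAnti l ∧ ∃ j, l j = 0) :=
    filter_congr fun l _ => and_congr_right fun hl =>
      (StrictAnti.antitone hl |>.exists_eq_zero_iff h).symm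
  rw [hfilter]
  have hshift := card_mul_sum_filter_exists_eq_zero (n := N) (G := Fin M) (minorProduct ζ)
    (minorProduct_add_const hζ) (fun _ => minorProduct_of_not_injective ζ)
  rw [Fintype.card_fin, sum_minorProduct hζ hNM, hsorted] at hshift
  have hpow : (M : K) ^ N = M * M ^ (N - 1) := by
    rw [← pow_succ', Nat.sub_add_cancel (by omega)]
  have hne : (N.factorial : K) * M ≠ 0 :=
    mul_ne_zero (Nat.cast_ne_zero.mpr N.factorial_ne_zero) (Nat.cast_ne_zero.mpr (NeZero.ne M))
  apply mul_left_cancel₀ hne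
  linear_combination hshift + N.factorial * N * hpow

end dftMatrix

/-- Erlijman-type computation: if `s` is a primitive `2(N+K)`-th root of unity in `ℂ`, then
`∑ a_l·ā_l = N(N+K)^{N-1}`, the sum running over strictly decreasing sequences
`N+K > l₁ > ⋯ > l_N = 0`, where `a_l = det(s^{2(i-1)l_j})` and `ā_l = det(s^{-2(i-1)l_j})`. -/
theorem sum_det_mul_conj_det (N K : ℕ) (hN : 1 ≤ N)
    (s : ℂ) (hs : IsPrimitiveRoot s (2 * (N + K))) :
    ∑ l ∈ Finset.univ.filter
        (fun l : Fin N → Fin (N + K) =>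
          (∀ i j : Fin N, i < j → l j < l i) ∧ (l ⟨N - 1, by omega⟩ : ℕ) = 0),
      (Matrix.det (Matrix.of fun i j : Fin N => s ^ (2 * (i : ℕ) * (l j : ℕ))) *
        Matrix.det (Matrix.of fun i j : Fin N => s ^ (-(2 * (i : ℕ) * (l j : ℕ)) : ℤ)))
      = (N : ℂ) * ((N : ℂ) + (K : ℂ)) ^ (N - 1) := by
  have : NeZero (N + K) := ⟨by omega⟩
  have hζ : IsPrimitiveRoot (s ^ 2) (N + K) := hs.pow (by omega) (by ring)
  have hsummand : ∀ l : Fin N → Fin (N + K),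
      Matrix.det (Matrix.of fun i j : Fin N => s ^ (2 * (i : ℕ) * (l j : ℕ))) *
        Matrix.det (Matrix.of fun i j : Fin N => s ^ (-(2 * (i : ℕ) * (l j : ℕ)) : ℤ))
      = dftMatrix.minorProduct (s ^ 2) l := by
    intro l
    congr 2 <;> ext i j
    · simp [dftMatrix, ← pow_mul, mul_assoc]
    · simp only [Matrix.of_apply, Matrix.submatrix_apply, dftMatrix, id]
      rw [inv_pow, ← pow_mul, ← zpow_natCast, ← zpow_neg]
      push_cast
      ring_nf
  rw [sum_congr rfl fun l _ => hsummand l,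
    dftMatrix.sum_minorProduct_of_strictAnti_of_last_eq_zero hζ (by omega), Nat.cast_add]
end

section
/- Let d be an even positive integer and let B be a symmetric m×m integer matrix (linking matrix) with diagonal entries b_{11},…,b_{mm}. The set of vectors c = (c₁,…,c_m) ∈ (ℤ/d)^m satisfying the ℤ/d-characteristic equation B·c ≡ (d/2)·(b_{11},…,b_{mm})ᵀ (mod d) is non-empty whenever the mod-2 reduction of B·x ≡ diag(B) (mod 2) has a solution; moreover, the solution set, if non-empty, is a coset of the kernel of B acting on (ℤ/d)^m. -/
/-- For an even `d > 0` and a symmetric integer linking matrix `B`, the `ℤ/d`-characteristic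
equation `B·c = (d/2)·diag(B)` in `(ℤ/d)^m` has a solution whenever its mod 2 reduction
`B·x = diag(B)` does, and the solution set, if non-empty, is a coset of `ker(B mod d)`. -/
theorem characteristic_solutions_coset (m d : ℕ) (hd : 0 < d) (hde : Even d)
    (B : Matrix (Fin m) (Fin m) ℤ) (hB : B.IsSymm) :
    ((∃ x : Fin m → ZMod 2,
        (B.map (Int.cast : ℤ → ZMod 2)).mulVec x = fun i => ((B i i : ℤ) : ZMod 2)) →
      ∃ c : Fin m → ZMod d,
        (B.map (Int.cast : ℤ → ZMod d)).mulVec c =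
          fun i => ((d / 2 : ℕ) : ZMod d) * ((B i i : ℤ) : ZMod d)) ∧
    (∀ c c' : Fin m → ZMod d,
      (B.map (Int.cast : ℤ → ZMod d)).mulVec c =
          (fun i => ((d / 2 : ℕ) : ZMod d) * ((B i i : ℤ) : ZMod d)) →
        ((B.map (Int.cast : ℤ → ZMod d)).mulVec c' =
            (fun i => ((d / 2 : ℕ) : ZMod d) * ((B i i : ℤ) : ZMod d)) ↔
          (B.map (Int.cast : ℤ → ZMod d)).mulVec (c' - c) = 0)) := by
  constructor
  · rintro ⟨x, hx⟩
    -- lift x to an integer vector v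
    set v : Fin m → ℤ := fun i => ((x i).val : ℤ) with hv
    have hx2 : ∀ i, ((B.mulVec v i : ℤ) : ZMod 2) = ((B i i : ℤ) : ZMod 2) := by
      intro i
      have h := congrFun hx i
      simp only [Matrix.mulVec, Matrix.map_apply, dotProduct] at h ⊢
      rw [← h]
      push_cast
      refine Finset.sum_congr rfl fun j _ => ?_
      congr 1
      simp [v, ZMod.natCast_val, ZMod.cast_id', ZMod.intCast_cast]
    have hdvd : ∀ i, (2:ℤ) ∣ B.mulVec v i - B i i := by
      intro i
      have h := (ZMod.intCast_eq_intCast_iff _ _ _).mp (hx2 i)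
      exact (Int.ModEq.dvd h.symm)
    refine ⟨fun j => ((((d/2 : ℕ) : ℤ) * v j : ℤ) : ZMod d), ?_⟩
    funext i
    obtain ⟨k, hk⟩ := hdvd i
    have hcast : (B.map (Int.cast : ℤ → ZMod d)).mulVec
        (fun j => ((((d/2 : ℕ) : ℤ) * v j : ℤ) : ZMod d)) i
        = ((((d/2 : ℕ) : ℤ) * B.mulVec v i : ℤ) : ZMod d) := by
      simp only [Matrix.mulVec, Matrix.map_apply, dotProduct, Finset.mul_sum,
        Int.cast_sum, Int.cast_mul]
      exact Finset.sum_congr rfl fun j _ => by ring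
    rw [hcast]
    have hBv : B.mulVec v i = B i i + 2 * k := by linarith [hk]
    rw [hBv]
    have h2d : ((d/2 : ℕ) : ℤ) * 2 = (d : ℤ) := by
      have := Nat.div_mul_cancel hde.two_dvd
      exact_mod_cast this
    have : (((d/2 : ℕ) : ℤ) * (B i i + 2 * k) : ℤ)
        = ((d/2 : ℕ) : ℤ) * B i i + (d : ℤ) * k := by
      rw [← h2d]; ring
    rw [this, Int.cast_add, Int.cast_mul, Int.cast_mul, Int.cast_natCast, Int.cast_natCast,
      ZMod.natCast_self, zero_mul, add_zero]
  · intro c c' hc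
    rw [Matrix.mulVec_sub, hc, sub_eq_zero]
end

section
/- Let λ ∈ Γ̄_{N,K} be a Young diagram with at most N rows and at most K columns, and let λ* be the complement of λ in the λ₁ × N rectangle, rotated to a Young diagram (λ*_i = λ₁ − λ_{N+1−i}). Then at v = s^{−N}, the quantum dimensions agree: ⟨λ*⟩ = ⟨λ⟩, where ⟨μ⟩ = ∏_{cells c of μ} [N + cn(c)]/[hl(c)]. -/
open Finset

/-- The quantum integer `[t] = (s^t - s^{-t})/(s - s⁻¹)`. -/
noncomputable def qint (s : ℂ) (t : ℤ) : ℂ := (s ^ t - s ^ (-t)) / (s - s⁻¹)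

/-- The quantum dimension `⟨λ⟩ = ∏_{cells c} [N + cn(c)]/[hl(c)]` at rank `N`, for a Young
diagram with at most `N` rows encoded by `l : ℕ → ℕ`; cells are `(i,j)` with `i < N`,
`j < l i` (0-based), `cn = j - i` and `hl = l i + λ^∨ j - i - j - 1`, where
`λ^∨ j = #{r < N : j < l r}`. -/
noncomputable def qdim (N : ℕ) (s : ℂ) (l : ℕ → ℕ) : ℂ :=
  ∏ i ∈ Finset.range N, ∏ j ∈ Finset.range (l i),
    qint s ((N : ℤ) + ((j : ℤ) - (i : ℤ))) /
      qint s ((l i : ℤ) + (((Finset.range N).filter (fun r => j < l r)).card : ℤ)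
        - (i : ℤ) - (j : ℤ) - 1)

/-! With the shifted parts `b_r = λ_r + N - 1 - r`, the hook lengths in row `i` together with the
differences `b_i - b_r` (`i < r < N`) are exactly `1, …, b_i`, while the contents shifted by `N`
run over `N - i, …, b_i`. Hence `⟨λ⟩ = ∏_{i<r} [b_i - b_r] / ∏_i [N-1-i]!`; the cancellations are
legitimate because every quantum integer involved is `[t]` with `0 < t < N + K`, which does not
vanish at a primitive `2(N+K)`-th root of unity. The shifted parts of `λ*` are
`λ₁ + N - 1 - b_{N-1-i}`, so reversing the order of the rows leaves the numerator unchanged. -/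

theorem zpow_sub_zpow_neg_ne_zero {F : Type*} [Field F] {s : F} {M k : ℕ}
    (hs : IsPrimitiveRoot s (2 * M)) (hk0 : 0 < k) (hkM : k < M) :
    s ^ (k : ℤ) - s ^ (-(k : ℤ)) ≠ 0 := by
  have hs0 : s ≠ 0 := hs.ne_zero (by omega)
  intro h
  have hinv : s ^ (k : ℤ) * s ^ (-(k : ℤ)) = 1 := by
    rw [zpow_neg, mul_inv_cancel₀ (zpow_ne_zero _ hs0)]
  rw [← sub_eq_zero.mp h, zpow_natCast, ← pow_add] at hinv
  have := Nat.le_of_dvd (by omega) (hs.dvd_of_pow_eq_one _ hinv)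
  omega

theorem qint_ne_zero {s : ℂ} {M : ℕ} (hs : IsPrimitiveRoot s (2 * M)) {t : ℤ}
    (ht0 : 0 < t) (htM : t < M) : qint s t ≠ 0 := by
  lift t to ℕ using ht0.le
  have hden := zpow_sub_zpow_neg_ne_zero (k := 1) hs one_pos (by omega)
  rw [Nat.cast_one, zpow_one, zpow_neg_one] at hden
  exact div_ne_zero (zpow_sub_zpow_neg_ne_zero hs (by omega) (by omega)) hden

noncomputable def qfact (s : ℂ) (n : ℕ) : ℂ := ∏ t ∈ range n, qint s (t + 1)

theorem qfact_ne_zero {s : ℂ} {M n : ℕ} (hs : IsPrimitiveRoot s (2 * M)) (hn : n < M) :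
    qfact s n ≠ 0 :=
  prod_ne_zero_iff.mpr fun t ht => qint_ne_zero hs (by omega) (by have := mem_range.mp ht; omega)

section ShiftedParts

variable {l : ℕ → ℕ} {N i j : ℕ}

def shiftedPart (l : ℕ → ℕ) (N r : ℕ) : ℕ := l r + (N - 1 - r)

def lowerCount (l : ℕ → ℕ) (N i j : ℕ) : ℕ := #{r ∈ Ioo i N | l r ≤ j}

theorem lowerCount_le : lowerCount l N i j ≤ N - 1 - i :=
  (card_filter_le _ _).trans (by rw [Nat.card_Ioo]; omega)

theorem lowerCount_mono : Monotone (lowerCount l N i) :=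
  fun _ _ hj => card_le_card fun _ hr => by
    rw [mem_filter] at hr ⊢
    exact ⟨hr.1, hr.2.trans hj⟩

theorem strictMono_add_lowerCount : StrictMono fun j => j + lowerCount l N i j :=
  fun _ _ h => add_lt_add_of_lt_of_le h (lowerCount_mono h.le)

theorem strictAntiOn_shiftedPart (hl : Antitone l) : StrictAntiOn (shiftedPart l N) (Set.Iio N) :=
  fun a ha b hb hab => by
    have := hl hab.le
    simp only [shiftedPart, Set.mem_Iio] at *
    omega

theorem add_lowerCount_lt_shiftedPart (hj : j < l i) :
    j + lowerCount l N i j < shiftedPart l N i :=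
  add_lt_add_of_lt_of_le hj lowerCount_le

theorem add_lowerCount_ne_shiftedPart (hl : Antitone l) {r : ℕ}
    (hr : r ∈ Ioo i N) : j + lowerCount l N i j ≠ shiftedPart l N r := by
  obtain ⟨hir, hrN⟩ := mem_Ioo.mp hr
  unfold shiftedPart lowerCount
  by_cases hrj : l r ≤ j
  · have : Ico r N ⊆ {r' ∈ Ioo i N | l r' ≤ j} := fun r' hr' => by
      obtain ⟨h1, h2⟩ := mem_Ico.mp hr'
      exact mem_filter.mpr ⟨mem_Ioo.mpr ⟨by omega, h2⟩, (hl h1).trans hrj⟩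
    have := card_le_card this
    rw [Nat.card_Ico] at this
    omega
  · have : {r' ∈ Ioo i N | l r' ≤ j} ⊆ Ioo r N := fun r' hr' => by
      obtain ⟨h1, h2⟩ := mem_filter.mp hr'
      have : r < r' := by
        by_contra! h
        exact hrj ((hl h).trans h2)
      exact mem_Ioo.mpr ⟨this, (mem_Ioo.mp h1).2⟩
    have := card_le_card this
    rw [Nat.card_Ioo] at this
    omega

/-- The values `j + lowerCount j` (`j < λ_i`) and `b_r` (`i < r < N`) partition `{0, …, b_i - 1}`
(Macdonald, *Symmetric functions*, I.(1.7)). -/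
theorem prod_add_lowerCount_mul_prod_shiftedPart {M : Type*} [CommMonoid M] (hl : Antitone l)
    (f : ℕ → M) :
    (∏ j ∈ range (l i), f (j + lowerCount l N i j)) * ∏ r ∈ Ioo i N, f (shiftedPart l N r) =
      ∏ t ∈ range (shiftedPart l N i), f t := by
  have hinj₁ : Set.InjOn (fun j => j + lowerCount l N i j) (range (l i)) :=
    strictMono_add_lowerCount.injective.injOn
  have hinj₂ : Set.InjOn (shiftedPart l N) (Ioo i N) :=
    (strictAntiOn_shiftedPart hl).injOn.mono fun r hr => (mem_Ioo.mp hr).2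
  have hdisj : Disjoint ((range (l i)).image fun j => j + lowerCount l N i j)
      ((Ioo i N).image (shiftedPart l N)) := by
    simp only [disjoint_left, mem_image, mem_range, not_exists, not_and]
    rintro _ ⟨j, hj, rfl⟩ r hr
    exact (add_lowerCount_ne_shiftedPart hl hr).symm
  have hsub : ((range (l i)).image fun j => j + lowerCount l N i j) ∪
      (Ioo i N).image (shiftedPart l N) ⊆ range (shiftedPart l N i) := by
    simp only [union_subset_iff, image_subset_iff, mem_range]
    refine ⟨fun j hj => add_lowerCount_lt_shiftedPart hj, fun r hr => ?_⟩
    obtain ⟨hir, hrN⟩ := mem_Ioo.mp hr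
    exact strictAntiOn_shiftedPart hl (hir.trans hrN) hrN hir
  have hunion := eq_of_subset_of_card_le hsub (by
    rw [card_union_of_disjoint hdisj, card_image_of_injOn hinj₁, card_image_of_injOn hinj₂,
      card_range, card_range, Nat.card_Ioo, shiftedPart]
    omega)
  rw [← prod_image hinj₁, ← prod_image hinj₂, ← prod_union hdisj, hunion]

theorem card_filter_lt_add_lowerCount (hl : Antitone l) (hj : j < l i) :
    #{r ∈ range N | j < l r} + lowerCount l N i j = N := by
  have hcompl : {r ∈ range N | ¬ j < l r} = {r ∈ Ioo i N | l r ≤ j} := by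
    ext r
    simp only [mem_filter, mem_range, mem_Ioo, not_lt]
    constructor
    · rintro ⟨hrN, hrj⟩
      refine ⟨⟨?_, hrN⟩, hrj⟩
      by_contra! h
      exact absurd ((hl h).trans hrj) (not_le.mpr hj)
    · rintro ⟨⟨-, hrN⟩, hrj⟩
      exact ⟨hrN, hrj⟩
  rw [lowerCount, ← hcompl, card_filter_add_card_filter_not, card_range]

theorem hook_eq_shiftedPart_sub (hl : Antitone l) (hi : i < N) (hj : j < l i) :
    (l i : ℤ) + (#{r ∈ range N | j < l r} : ℤ) - i - j - 1 =
      (shiftedPart l N i : ℤ) - ((j + lowerCount l N i j : ℕ) : ℤ) := by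
  have := card_filter_lt_add_lowerCount (N := N) hl hj
  unfold shiftedPart
  omega

theorem shiftedPart_star_add (hl : Antitone l) (hi : i < N) :
    shiftedPart (fun r => l 0 - l (N - 1 - r)) N i + shiftedPart l N (N - 1 - i) =
      l 0 + (N - 1) := by
  have := hl (Nat.zero_le (N - 1 - i))
  simp only [shiftedPart]
  omega

end ShiftedParts

theorem prod_Ioo_reflect {M : Type*} [CommMonoid M] (N : ℕ) (g : ℕ → ℕ → M) :
    ∏ i ∈ range N, ∏ r ∈ Ioo i N, g (N - 1 - r) (N - 1 - i) =
      ∏ i ∈ range N, ∏ r ∈ Ioo i N, g i r := by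
  rw [prod_sigma', prod_sigma']
  refine prod_nbij' (fun p => ⟨N - 1 - p.2, N - 1 - p.1⟩) (fun p => ⟨N - 1 - p.2, N - 1 - p.1⟩)
    ?_ ?_ ?_ ?_ fun _ _ => rfl
  iterate 2
    rintro ⟨i, r⟩ h
    simp only [mem_sigma, mem_range, mem_Ioo] at h ⊢
    omega
  iterate 2
    rintro ⟨i, r⟩ h
    simp only [mem_sigma, mem_range, mem_Ioo] at h
    dsimp only
    rw [Nat.sub_sub_self (by omega : i ≤ N - 1),
      Nat.sub_sub_self (by omega : r ≤ N - 1)]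

theorem prod_content_mul_qfact (s : ℂ) {N i : ℕ} (hi : i < N) (L : ℕ) :
    (∏ j ∈ range L, qint s ((N : ℤ) + ((j : ℤ) - (i : ℤ)))) * qfact s (N - 1 - i) =
      qfact s (L + (N - 1 - i)) := by
  rw [qfact, qfact, add_comm L, prod_range_add, mul_comm]
  congr 1
  refine prod_congr rfl fun j _ => ?_
  congr 1
  push_cast
  omega

theorem prod_hook_mul_prod_sub_shiftedPart (s : ℂ) {l : ℕ → ℕ} (hl : Antitone l) {N i : ℕ} :
    (∏ j ∈ range (l i), qint s ((shiftedPart l N i : ℤ) - ((j + lowerCount l N i j : ℕ) : ℤ))) *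
        ∏ r ∈ Ioo i N, qint s ((shiftedPart l N i : ℤ) - shiftedPart l N r) =
      qfact s (shiftedPart l N i) := by
  refine (prod_add_lowerCount_mul_prod_shiftedPart hl
    fun t : ℕ => qint s ((shiftedPart l N i : ℤ) - t)).trans ?_
  rw [qfact, ← prod_range_reflect]
  refine prod_congr rfl fun t ht => ?_
  have := mem_range.mp ht
  congr 1
  omega

theorem prod_row_eq {s : ℂ} {N K : ℕ} (hs : IsPrimitiveRoot s (2 * (N + K))) {l : ℕ → ℕ}
    (hl : Antitone l) (hK : l 0 ≤ K) {i : ℕ} (hi : i < N) :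
    ∏ j ∈ range (l i), qint s ((N : ℤ) + ((j : ℤ) - (i : ℤ))) /
        qint s ((l i : ℤ) + (#{r ∈ range N | j < l r} : ℤ) - (i : ℤ) - (j : ℤ) - 1) =
      (∏ r ∈ Ioo i N, qint s ((shiftedPart l N i : ℤ) - shiftedPart l N r)) /
        qfact s (N - 1 - i) := by
  have hb : shiftedPart l N i < N + K := by
    have := hl (Nat.zero_le i)
    unfold shiftedPart
    omega
  have hhooks : ∏ j ∈ range (l i),
      qint s ((l i : ℤ) + (#{r ∈ range N | j < l r} : ℤ) - (i : ℤ) - (j : ℤ) - 1) =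
      ∏ j ∈ range (l i), qint s ((shiftedPart l N i : ℤ) - ((j + lowerCount l N i j : ℕ) : ℤ)) :=
    prod_congr rfl fun j hj => by rw [hook_eq_shiftedPart_sub hl hi (mem_range.mp hj)]
  have hhooks_ne : ∏ j ∈ range (l i),
      qint s ((shiftedPart l N i : ℤ) - ((j + lowerCount l N i j : ℕ) : ℤ)) ≠ 0 :=
    prod_ne_zero_iff.mpr fun j hj => by
      have := add_lowerCount_lt_shiftedPart (N := N) (mem_range.mp hj)
      exact qint_ne_zero hs (by omega) (by omega)
  rw [prod_div_distrib, hhooks, div_eq_div_iff hhooks_ne (qfact_ne_zero hs (by omega)),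
    prod_content_mul_qfact s hi, mul_comm]
  exact (prod_hook_mul_prod_sub_shiftedPart s hl).symm

theorem qdim_eq_prod_div {s : ℂ} {N K : ℕ} (hs : IsPrimitiveRoot s (2 * (N + K))) {l : ℕ → ℕ}
    (hl : Antitone l) (hK : l 0 ≤ K) :
    qdim N s l = (∏ i ∈ range N, ∏ r ∈ Ioo i N,
        qint s ((shiftedPart l N i : ℤ) - shiftedPart l N r)) /
      ∏ i ∈ range N, qfact s (N - 1 - i) := by
  rw [qdim, ← prod_div_distrib]
  exact prod_congr rfl fun i hi => prod_row_eq hs hl hK (mem_range.mp hi)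

theorem qdim_star_eq_general (N K : ℕ) (s : ℂ)
    (hs : IsPrimitiveRoot s (2 * (N + K)))
    (l : ℕ → ℕ) (hmono : Antitone l) (hcols : l 0 ≤ K) :
    qdim N s (fun i => l 0 - l (N - 1 - i)) = qdim N s l := by
  have hstar : Antitone fun i => l 0 - l (N - 1 - i) := fun a b hab => by
    have := hmono (Nat.sub_le_sub_left hab (N - 1))
    dsimp only
    omega
  rw [qdim_eq_prod_div hs hstar (by omega), qdim_eq_prod_div hs hmono hcols]
  congr 1
  refine .trans (prod_congr rfl fun i hi => prod_congr rfl fun r hr => ?_)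
    (prod_Ioo_reflect N fun i r => qint s ((shiftedPart l N i : ℤ) - shiftedPart l N r))
  have := shiftedPart_star_add hmono (mem_range.mp hi)
  have := shiftedPart_star_add hmono ((mem_Ioo.mp hr).2)
  congr 1
  omega

/-- For `λ ∈ Γ̄_{N,K}` (at most `N` rows, at most `K` columns) and `s` a primitive
`2(N+K)`-th root of unity, the quantum dimension of the rotated complement
`λ*` (with parts `λ*_i = λ₁ - λ_{N+1-i}`) equals that of `λ`. -/
theorem qdim_star_eq (N K : ℕ) (hN : 0 < N) (s : ℂ)
    (hs : IsPrimitiveRoot s (2 * (N + K)))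
    (l : ℕ → ℕ) (hmono : Antitone l) (hrows : ∀ i, N ≤ i → l i = 0) (hcols : l 0 ≤ K) :
    qdim N s (fun i => l 0 - l (N - 1 - i)) = qdim N s l :=
  qdim_star_eq_general N K s hs l hmono hcols
end
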